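/- arXiv:2001.10136 — 2 statements merged into one kernel-verified Lean document; each statement's English description precedes it below -/
import Mathlib

section
/- The map ψ : D → B defined by x·ψ(d) = τ(x·d) for all x ∈ X, d ∈ D (under the identification of B with the adjointable left A-linear operators on X) satisfies ψ(⟨x, y⟩_D) = ⟨x, τ(y)⟩_B for all x ∈ X, y ∈ Y. -/
/-- A pair `(X, Y)` implementing a strong Morita equivalence of unital inclusions
`A ⊆ C` and `B ⊆ D` of unital C*-algebras: `Y` is a `C`–`D`-equivalence bimodule and
`X` is a closed subspace of `Y` which is an `A`–`B`-equivalence bimodule with the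
restricted actions and inner products. -/
structure MoritaPair
    (A : Type*) [NormedRing A] [StarRing A] [CStarRing A] [NormedAlgebra ℂ A]
      [CompleteSpace A] [StarModule ℂ A]
    (C : Type*) [NormedRing C] [StarRing C] [CStarRing C] [NormedAlgebra ℂ C]
      [CompleteSpace C] [StarModule ℂ C]
    (B : Type*) [NormedRing B] [StarRing B] [CStarRing B] [NormedAlgebra ℂ B]
      [CompleteSpace B] [StarModule ℂ B]
    (D : Type*) [NormedRing D] [StarRing D] [CStarRing D] [NormedAlgebra ℂ D]
      [CompleteSpace D] [StarModule ℂ D]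
    (X : Type*) [NormedAddCommGroup X] [NormedSpace ℂ X]
    (Y : Type*) [NormedAddCommGroup Y] [NormedSpace ℂ Y] [CompleteSpace Y] where
  /-- the unital isometric *-embedding of `A` into `C` -/
  ιA : A →⋆ₐ[ℂ] C
  /-- the unital isometric *-embedding of `B` into `D` -/
  ιB : B →⋆ₐ[ℂ] D
  ιA_isometry : Isometry ιA
  ιB_isometry : Isometry ιB
  /-- the inclusion of the closed subspace `X` into `Y` -/
  incl : X →ₗ[ℂ] Y
  incl_norm : ∀ x, ‖incl x‖ = ‖x‖
  incl_closed : IsClosed (Set.range incl)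
  /-- left action of `C` on `Y` -/
  lC : C → Y → Y
  lC_one : ∀ y, lC 1 y = y
  lC_mul : ∀ c c' y, lC (c * c') y = lC c (lC c' y)
  lC_add_right : ∀ c y y', lC c (y + y') = lC c y + lC c y'
  lC_add_left : ∀ c c' y, lC (c + c') y = lC c y + lC c' y
  lC_smul : ∀ (z : ℂ) c y, lC (z • c) y = z • lC c y
  /-- right action of `D` on `Y` -/
  rD : Y → D → Y
  rD_one : ∀ y, rD y 1 = y
  rD_mul : ∀ y d d', rD y (d * d') = rD (rD y d) d'
  rD_add_left : ∀ y y' d, rD (y + y') d = rD y d + rD y' d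
  rD_add_right : ∀ y d d', rD y (d + d') = rD y d + rD y d'
  rD_smul : ∀ (z : ℂ) y d, rD y (z • d) = z • rD y d
  smul_assoc : ∀ c y d, rD (lC c y) d = lC c (rD y d)
  /-- the left `C`-valued inner product on `Y` -/
  innC : Y → Y → C
  innC_add_left : ∀ y y' z, innC (y + y') z = innC y z + innC y' z
  innC_star : ∀ y z, star (innC y z) = innC z y
  innC_lC : ∀ c y z, innC (lC c y) z = c * innC y z
  innC_norm : ∀ y, ‖innC y y‖ = ‖y‖ ^ 2
  /-- the right `D`-valued inner product on `Y` -/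
  innD : Y → Y → D
  innD_add_right : ∀ y z z', innD y (z + z') = innD y z + innD y z'
  innD_star : ∀ y z, star (innD y z) = innD z y
  innD_rD : ∀ y z d, innD y (rD z d) = innD y z * d
  innD_norm : ∀ y, ‖innD y y‖ = ‖y‖ ^ 2
  imprimitivity : ∀ y z w, lC (innC y z) w = rD y (innD z w)
  innC_full : (Submodule.span ℂ {c : C | ∃ y z, innC y z = c}).topologicalClosure = ⊤
  innD_full : (Submodule.span ℂ {d : D | ∃ y z, innD y z = d}).topologicalClosure = ⊤
  /-- left action of `A` on `X`, the restriction of the `C`-action -/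
  lA : A → X → X
  lA_compat : ∀ a x, incl (lA a x) = lC (ιA a) (incl x)
  /-- right action of `B` on `X`, the restriction of the `D`-action -/
  rB : X → B → X
  rB_compat : ∀ x b, incl (rB x b) = rD (incl x) (ιB b)
  /-- the left `A`-valued inner product on `X`, the restriction of `innC` -/
  innA : X → X → A
  innA_compat : ∀ x z, ιA (innA x z) = innC (incl x) (incl z)
  /-- the right `B`-valued inner product on `X`, the restriction of `innD` -/
  innB : X → X → B
  innB_compat : ∀ x z, ιB (innB x z) = innD (incl x) (incl z)
  innA_full : (Submodule.span ℂ {a : A | ∃ x z, innA x z = a}).topologicalClosure = ⊤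
  innB_full : (Submodule.span ℂ {b : B | ∃ x z, innB x z = b}).topologicalClosure = ⊤

variable {A : Type*} [NormedRing A] [StarRing A] [CStarRing A] [NormedAlgebra ℂ A]
  [CompleteSpace A] [StarModule ℂ A]
variable {C : Type*} [NormedRing C] [StarRing C] [CStarRing C] [NormedAlgebra ℂ C]
  [CompleteSpace C] [StarModule ℂ C]
variable {B : Type*} [NormedRing B] [StarRing B] [CStarRing B] [NormedAlgebra ℂ B]
  [CompleteSpace B] [StarModule ℂ B]
variable {D : Type*} [NormedRing D] [StarRing D] [CStarRing D] [NormedAlgebra ℂ D]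
  [CompleteSpace D] [StarModule ℂ D]
variable {X : Type*} [NormedAddCommGroup X] [NormedSpace ℂ X]
variable {Y : Type*} [NormedAddCommGroup Y] [NormedSpace ℂ Y] [CompleteSpace Y]

/-! The right action of `B` on `X` is faithful, since `⟨X, X⟩_B` is dense in `B`. So it suffices
to compare `z · ψ(⟨x, y⟩_D)` and `z · ⟨x, τ y⟩_B` for `z ∈ X`. By definition of `ψ` and the
imprimitivity condition, the first is `τ(⟨z, x⟩_A · y)`; left `A`-linearity of `φ` makes `τ` left
`A`-linear, giving `⟨z, x⟩_A · τ y`, which is the second by imprimitivity in `X`. -/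

theorem eq_zero_of_forall_mul_eq_zero_of_span_dense {𝕜 R : Type*}
    [CommSemiring 𝕜] [Semiring R] [Algebra 𝕜 R] [TopologicalSpace R] [ContinuousAdd R]
    [ContinuousMul R] [ContinuousConstSMul 𝕜 R] [T1Space R] {S : Set R}
    (hS : (Submodule.span 𝕜 S).topologicalClosure = ⊤) {r : R} (h : ∀ s ∈ S, s * r = 0) :
    r = 0 := by
  have hker : Submodule.span 𝕜 S ≤ LinearMap.ker (LinearMap.mulRight 𝕜 r) :=
    Submodule.span_le.2 h
  have hclosed : IsClosed (LinearMap.ker (LinearMap.mulRight 𝕜 r) : Set R) :=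
    isClosed_singleton.preimage (continuous_mul_const r)
  have h1 : (1 : R) ∈ LinearMap.ker (LinearMap.mulRight 𝕜 r) :=
    Submodule.topologicalClosure_minimal _ hker hclosed (hS ▸ Submodule.mem_top)
  simpa using h1

namespace MoritaPair

variable (M : MoritaPair A C B D X Y)

theorem incl_injective : Function.Injective M.incl :=
  (⟨M.incl, M.incl_norm⟩ : X →ₗᵢ[ℂ] Y).injective

theorem innC_sub_left (y y' z : Y) : M.innC (y - y') z = M.innC y z - M.innC y' z :=
  (AddMonoidHom.mk' (M.innC · z) (M.innC_add_left · · z)).map_sub y y'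

theorem eq_of_forall_innA_eq {u v : X} (h : ∀ w, M.innA u w = M.innA v w) : u = v := by
  have hzero : M.innC (M.incl (u - v)) (M.incl (u - v)) = 0 := by
    rw [map_sub, M.innC_sub_left, ← map_sub, ← M.innA_compat, ← M.innA_compat, h, sub_self]
  have hnorm : ‖u - v‖ ^ 2 = 0 := by
    rw [← M.incl_norm, ← M.innC_norm, hzero, norm_zero]
  exact sub_eq_zero.1 (norm_eq_zero.1 (pow_eq_zero_iff two_ne_zero |>.1 hnorm))

theorem innB_rB (z w : X) (b : B) : M.innB z (M.rB w b) = M.innB z w * b :=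
  M.ιB_isometry.injective <| by
    rw [map_mul, M.innB_compat, M.rB_compat, M.innD_rD, M.innB_compat]

theorem eq_of_forall_rB_eq {b b' : B} (h : ∀ z, M.rB z b = M.rB z b') : b = b' := by
  refine sub_eq_zero.1 (eq_zero_of_forall_mul_eq_zero_of_span_dense
    M.innB_full ?_)
  rintro _ ⟨z, w, rfl⟩
  rw [mul_sub, ← M.innB_rB, ← M.innB_rB, h, sub_self]

theorem lA_innA (z x w : X) : M.lA (M.innA z x) w = M.rB z (M.innB x w) :=
  M.incl_injective <| by
    rw [M.lA_compat, M.innA_compat, M.imprimitivity, M.rB_compat, M.innB_compat]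

theorem map_lC_of_innA_eq (φ : C → A) (hφ : ∀ a c, φ (M.ιA a * c) = a * φ c) (τ : Y → X)
    (hτ : ∀ y x, M.innA (τ y) x = φ (M.innC y (M.incl x))) (a : A) (y : Y) :
    τ (M.lC (M.ιA a) y) = M.lA a (τ y) :=
  M.eq_of_forall_innA_eq fun w => M.ιA_isometry.injective <| by
    rw [hτ, M.innC_lC, hφ, map_mul, ← hτ, M.innA_compat, M.innA_compat, M.lA_compat,
      M.innC_lC]

end MoritaPair

/-- the map `ψ : D → B` defined by `x·ψ(d) = τ(x·d)` satisfies
`ψ(⟨x, y⟩_D) = ⟨x, τ(y)⟩_B` for all `x ∈ X`, `y ∈ Y`. -/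
theorem stmt5 (M : MoritaPair A C B D X Y) (φ : C →L[ℂ] A)
    (hφ : ∀ (a : A) (c : C), φ (M.ιA a * c) = a * φ c ∧ φ (c * M.ιA a) = φ c * a)
    (τ : Y →ₗ[ℂ] X)
    (hτ : ∀ (y : Y) (x : X), M.innA (τ y) x = φ (M.innC y (M.incl x)))
    (ψ : D →ₗ[ℂ] B)
    (hψ : ∀ (x : X) (d : D), M.rB x (ψ d) = τ (M.rD (M.incl x) d)) :
    ∀ (x : X) (y : Y), ψ (M.innD (M.incl x) y) = M.innB x (τ y) := by
  intro x y
  refine M.eq_of_forall_rB_eq fun z => ?_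
  calc M.rB z (ψ (M.innD (M.incl x) y))
      = τ (M.lC (M.ιA (M.innA z x)) y) := by
        rw [hψ, ← M.imprimitivity, M.innA_compat]
    _ = M.lA (M.innA z x) (τ y) := M.map_lC_of_innA_eq φ (fun a c => (hφ a c).1) τ hτ _ _
    _ = M.rB z (M.innB x (τ y)) := M.lA_innA z x (τ y)
end

section
/- If a bounded A-bimodule linear map φ : C → A has a quasi-basis, then f(φ) : D → B has a quasi-basis. -/
variable {A : Type*} [NormedRing A] [StarRing A] [CStarRing A] [NormedAlgebra ℂ A]
  [CompleteSpace A] [StarModule ℂ A]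
variable {C : Type*} [NormedRing C] [StarRing C] [CStarRing C] [NormedAlgebra ℂ C]
  [CompleteSpace C] [StarModule ℂ C]
variable {B : Type*} [NormedRing B] [StarRing B] [CStarRing B] [NormedAlgebra ℂ B]
  [CompleteSpace B] [StarModule ℂ B]
variable {D : Type*} [NormedRing D] [StarRing D] [CStarRing D] [NormedAlgebra ℂ D]
  [CompleteSpace D] [StarModule ℂ D]
variable {X : Type*} [NormedAddCommGroup X] [NormedSpace ℂ X]
variable {Y : Type*} [NormedAddCommGroup Y] [NormedSpace ℂ Y] [CompleteSpace Y]

open Finset in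
private lemma one_eq_sum_inn {A' : Type*} [NormedRing A'] [NormedAlgebra ℂ A']
    [CompleteSpace A'] {X' : Type*} (inn : X' → X' → A')
    (hd : (Submodule.span ℂ {a : A' | ∃ x z, inn x z = a}).topologicalClosure = ⊤)
    (hm : ∀ (a : A') (x z : X'), ∃ x' z', inn x z * a = inn x' z')
    (hs : ∀ (c : ℂ) (x z : X'), ∃ x' z', c • inn x z = inn x' z') :
    ∃ (n : ℕ) (x w : Fin n → X'), (1 : A') = ∑ i, inn (x i) (w i) := by
  set S : Set A' := {a : A' | ∃ x z, inn x z = a} with hS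
  set P : A' → Prop := fun a => ∃ (n : ℕ) (x w : Fin n → X'), a = ∑ i, inn (x i) (w i) with hP
  have hP0 : P 0 := ⟨0, Fin.elim0, Fin.elim0, by simp⟩
  have hPadd : ∀ a b, P a → P b → P (a + b) := by
    rintro a b ⟨n₁, x₁, w₁, rfl⟩ ⟨n₂, x₂, w₂, rfl⟩
    refine ⟨n₁ + n₂, Fin.append x₁ x₂, Fin.append w₁ w₂, ?_⟩
    rw [Fin.sum_univ_add]
    simp [Fin.append_left, Fin.append_right]
  have hPsmul : ∀ (c : ℂ) a, P a → P (c • a) := by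
    rintro c a ⟨n, x, w, rfl⟩
    choose x' w' h using fun i => hs c (x i) (w i)
    exact ⟨n, x', w', by rw [Finset.smul_sum]; exact Finset.sum_congr rfl fun i _ => h i⟩
  have hPmul : ∀ a (r : A'), P a → P (a * r) := by
    rintro a r ⟨n, x, w, rfl⟩
    choose x' w' h using fun i => hm r (x i) (w i)
    exact ⟨n, x', w', by rw [Finset.sum_mul]; exact Finset.sum_congr rfl fun i _ => h i⟩
  have hspan : ∀ a ∈ Submodule.span ℂ S, P a := by
    intro a ha
    induction ha using Submodule.span_induction with
    | mem x h => exact let ⟨x₀, z₀, h₀⟩ := h; ⟨1, fun _ => x₀, fun _ => z₀, by simp [h₀]⟩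
    | zero => exact hP0
    | add x y _ _ hx hy => exact hPadd _ _ hx hy
    | smul c x _ hx => exact hPsmul c x hx
  have h1 : (1 : A') ∈ closure ((Submodule.span ℂ S : Submodule ℂ A') : Set A') := by
    rw [← Submodule.topologicalClosure_coe, hd]
    simp
  obtain ⟨t, htS, htd⟩ := Metric.mem_closure_iff.mp h1 1 one_pos
  have hnorm : ‖1 - t‖ < 1 := by rwa [dist_eq_norm] at htd
  have ht : IsUnit t := by
    have h' := isUnit_one_sub_of_norm_lt_one hnorm
    rwa [sub_sub_cancel] at h'
  obtain ⟨uu, huu⟩ := ht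
  have hP1 := hPmul t (↑uu⁻¹) (hspan t htS)
  rwa [show t * (↑uu⁻¹ : A') = 1 by rw [← huu, Units.mul_inv]] at hP1


namespace MoritaPair

variable (M : MoritaPair A C B D X Y)

private lemma iotaA_injective : Function.Injective M.ιA := M.ιA_isometry.injective

private lemma iotaB_injective : Function.Injective M.ιB := M.ιB_isometry.injective

private lemma innC_sum_left {ι : Type*} (s : Finset ι) (f : ι → Y) (z : Y) :
    M.innC (∑ i ∈ s, f i) z = ∑ i ∈ s, M.innC (f i) z :=
  map_sum (AddMonoidHom.mk' (fun y => M.innC y z) (fun a b => M.innC_add_left a b z)) f s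

private lemma innC_add_right (y z z' : Y) :
    M.innC y (z + z') = M.innC y z + M.innC y z' := by
  have h := congrArg star (M.innC_add_left z z' y)
  simpa [M.innC_star, star_add] using h

private lemma innC_sum_right {ι : Type*} (s : Finset ι) (y : Y) (f : ι → Y) :
    M.innC y (∑ i ∈ s, f i) = ∑ i ∈ s, M.innC y (f i) :=
  map_sum (AddMonoidHom.mk' (fun z => M.innC y z) (fun a b => M.innC_add_right y a b)) f s

private lemma innD_add_left (y y' z : Y) :
    M.innD (y + y') z = M.innD y z + M.innD y' z := by
  have h := congrArg star (M.innD_add_right z y y')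
  simpa [M.innD_star, star_add] using h

private lemma innD_sum_left {ι : Type*} (s : Finset ι) (f : ι → Y) (z : Y) :
    M.innD (∑ i ∈ s, f i) z = ∑ i ∈ s, M.innD (f i) z :=
  map_sum (AddMonoidHom.mk' (fun y => M.innD y z) (fun a b => M.innD_add_left a b z)) f s

private lemma innD_sum_right {ι : Type*} (s : Finset ι) (y : Y) (f : ι → Y) :
    M.innD y (∑ i ∈ s, f i) = ∑ i ∈ s, M.innD y (f i) :=
  map_sum (AddMonoidHom.mk' (fun z => M.innD y z) (fun a b => M.innD_add_right y a b)) f s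

private lemma lC_sum_left {ι : Type*} (s : Finset ι) (f : ι → C) (y : Y) :
    M.lC (∑ i ∈ s, f i) y = ∑ i ∈ s, M.lC (f i) y :=
  map_sum (AddMonoidHom.mk' (fun c => M.lC c y) (fun a b => M.lC_add_left a b y)) f s

private lemma rD_sum_right {ι : Type*} (s : Finset ι) (y : Y) (f : ι → D) :
    M.rD y (∑ i ∈ s, f i) = ∑ i ∈ s, M.rD y (f i) :=
  map_sum (AddMonoidHom.mk' (fun d => M.rD y d) (fun a b => M.rD_add_right y a b)) f s

private lemma innD_rD_left (y : Y) (d : D) (z : Y) :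
    M.innD (M.rD y d) z = star d * M.innD y z := by
  have h := congrArg star (M.innD_rD z y d)
  simpa [M.innD_star, star_mul] using h

private lemma innC_mul_right (y z : Y) (c : C) :
    M.innC y (M.lC (star c) z) = M.innC y z * c := by
  have h := congrArg star (M.innC_lC (star c) z y)
  simpa [M.innC_star, star_mul] using h

private lemma innC_smul_left (c : ℂ) (y z : Y) :
    M.innC (c • y) z = c • M.innC y z := by
  have h : c • y = M.lC (c • (1 : C)) y := by rw [M.lC_smul, M.lC_one]
  rw [h, M.innC_lC, smul_mul_assoc, one_mul]

private lemma innD_smul_right (c : ℂ) (y z : Y) :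
    M.innD y (c • z) = c • M.innD y z := by
  have h : c • z = M.rD z (c • (1 : D)) := by rw [M.rD_smul, M.rD_one]
  rw [h, M.innD_rD, mul_smul_comm, mul_one]

private lemma innA_mul_right (x z : X) (a : A) :
    M.innA x z * a = M.innA x (M.lA (star a) z) := by
  apply M.iotaA_injective
  calc M.ιA (M.innA x z * a)
      = M.innC (M.incl x) (M.incl z) * M.ιA a := by rw [map_mul, M.innA_compat]
    _ = M.innC (M.incl x) (M.lC (star (M.ιA a)) (M.incl z)) := (M.innC_mul_right _ _ _).symm
    _ = M.innC (M.incl x) (M.incl (M.lA (star a) z)) := by rw [← map_star, ← M.lA_compat]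
    _ = M.ιA (M.innA x (M.lA (star a) z)) := (M.innA_compat _ _).symm

private lemma innA_smul (c : ℂ) (x z : X) :
    c • M.innA x z = M.innA (c • x) z := by
  apply M.iotaA_injective
  calc M.ιA (c • M.innA x z)
      = c • M.innC (M.incl x) (M.incl z) := by rw [map_smul, M.innA_compat]
    _ = M.innC (c • M.incl x) (M.incl z) := (M.innC_smul_left _ _ _).symm
    _ = M.innC (M.incl (c • x)) (M.incl z) := by rw [map_smul]
    _ = M.ιA (M.innA (c • x) z) := (M.innA_compat _ _).symm

private lemma innB_mul_right (x z : X) (b : B) :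
    M.innB x z * b = M.innB x (M.rB z b) := by
  apply M.iotaB_injective
  calc M.ιB (M.innB x z * b)
      = M.innD (M.incl x) (M.incl z) * M.ιB b := by rw [map_mul, M.innB_compat]
    _ = M.innD (M.incl x) (M.rD (M.incl z) (M.ιB b)) := (M.innD_rD _ _ _).symm
    _ = M.innD (M.incl x) (M.incl (M.rB z b)) := by rw [← M.rB_compat]
    _ = M.ιB (M.innB x (M.rB z b)) := (M.innB_compat _ _).symm

private lemma innB_smul (c : ℂ) (x z : X) :
    c • M.innB x z = M.innB x (c • z) := by
  apply M.iotaB_injective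
  calc M.ιB (c • M.innB x z)
      = c • M.innD (M.incl x) (M.incl z) := by rw [map_smul, M.innB_compat]
    _ = M.innD (M.incl x) (c • M.incl z) := (M.innD_smul_right _ _ _).symm
    _ = M.innD (M.incl x) (M.incl (c • z)) := by rw [map_smul]
    _ = M.ιB (M.innB x (c • z)) := (M.innB_compat _ _).symm

end MoritaPair

/-- if the bounded `A`-bimodule map `φ : C → A` has a quasi-basis, then
`f(φ) : D → B` has a quasi-basis. -/
theorem stmt15 (M : MoritaPair A C B D X Y) (φ : C →L[ℂ] A)
    (hφ : ∀ (a : A) (c : C), φ (M.ιA a * c) = a * φ c ∧ φ (c * M.ιA a) = φ c * a)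
    (m : ℕ) (u v : Fin m → C)
    (hqb : ∀ c : C, c = ∑ i, u i * M.ιA (φ (v i * c)) ∧
      c = ∑ i, M.ιA (φ (c * u i)) * v i)
    (ψ : D →L[ℂ] B)
    (hψ : ∀ (d : D) (x z : X),
      M.innA (M.rB x (ψ d)) z = φ (M.innC (M.rD (M.incl x) d) (M.incl z))) :
    ∃ (m' : ℕ) (u' v' : Fin m' → D), ∀ d : D,
      d = ∑ i, u' i * M.ιB (ψ (v' i * d)) ∧ d = ∑ i, M.ιB (ψ (d * u' i)) * v' i := by
  classical
  obtain ⟨N, xx, ww, hA1⟩ := one_eq_sum_inn M.innA M.innA_full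
    (fun a x z => ⟨x, M.lA (star a) z, M.innA_mul_right x z a⟩)
    (fun c x z => ⟨c • x, z, M.innA_smul c x z⟩)
  obtain ⟨NB, pp, qq, hB1⟩ := one_eq_sum_inn M.innB M.innB_full
    (fun b x z => ⟨x, M.rB z b, M.innB_mul_right x z b⟩)
    (fun c x z => ⟨x, c • z, M.innB_smul c x z⟩)
  have h1C : (1 : C) = ∑ k, M.innC (M.incl (xx k)) (M.incl (ww k)) := by
    have h := congrArg M.ιA hA1
    simpa [map_sum, map_one, M.innA_compat] using h
  have h1C' : (1 : C) = ∑ k, M.innC (M.incl (ww k)) (M.incl (xx k)) := by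
    have h := congrArg star h1C
    simpa [star_sum, M.innC_star] using h
  have h1D : (1 : D) = ∑ l, M.innD (M.incl (pp l)) (M.incl (qq l)) := by
    have h := congrArg M.ιB hB1
    simpa [map_sum, map_one, M.innB_compat] using h
  have hrep : ∀ c : C, c = ∑ k, M.innC (M.lC c (M.incl (xx k))) (M.incl (ww k)) := by
    intro c
    calc c = c * 1 := (mul_one c).symm
      _ = ∑ k, c * M.innC (M.incl (xx k)) (M.incl (ww k)) := by rw [h1C, Finset.mul_sum]
      _ = ∑ k, M.innC (M.lC c (M.incl (xx k))) (M.incl (ww k)) :=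
          Finset.sum_congr rfl fun k _ => (M.innC_lC _ _ _).symm
  have hfaith : ∀ c c' : C, (∀ w, M.lC c w = M.lC c' w) → c = c' := by
    intro c c' h
    rw [hrep c, hrep c']
    exact Finset.sum_congr rfl fun k _ => by rw [h]
  have hR3 : ∀ (y z : Y) (e : D), M.innC y (M.rD z e) = M.innC (M.rD y (star e)) z := by
    intro y z e
    refine hfaith _ _ fun w => ?_
    rw [M.imprimitivity, M.imprimitivity, M.innD_rD_left, M.rD_mul]
  have hR5 : ∀ y : Y, y = ∑ l, M.lC (M.innC y (M.incl (pp l))) (M.incl (qq l)) := by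
    intro y
    calc y = M.rD y 1 := (M.rD_one y).symm
      _ = ∑ l, M.rD y (M.innD (M.incl (pp l)) (M.incl (qq l))) := by
          rw [h1D, M.rD_sum_right]
      _ = ∑ l, M.lC (M.innC y (M.incl (pp l))) (M.incl (qq l)) :=
          Finset.sum_congr rfl fun l _ => (M.imprimitivity _ _ _).symm
  have hR6 : ∀ y : Y, y = ∑ k, M.rD (M.incl (xx k)) (M.innD (M.incl (ww k)) y) := by
    intro y
    calc y = M.lC 1 y := (M.lC_one y).symm
      _ = ∑ k, M.lC (M.innC (M.incl (xx k)) (M.incl (ww k))) y := by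
          rw [h1C, M.lC_sum_left]
      _ = _ := Finset.sum_congr rfl fun k _ => M.imprimitivity _ _ _
  have hR7 : ∀ (e : D) (x z : X),
      M.innC (M.rD (M.incl x) (M.ιB (ψ e))) (M.incl z)
        = M.ιA (φ (M.innC (M.rD (M.incl x) e) (M.incl z))) := by
    intro e x z
    have h := congrArg M.ιA (hψ e x z)
    rwa [M.innA_compat, M.rB_compat] at h
  have hL7 : ∀ (t : Y) (c : C) (y : Y),
      M.innD t (M.lC c y) = M.innD (M.lC (star c) t) y := by
    intro t c y
    have hc : c = ∑ k, M.innC (M.incl (xx k)) (M.lC (star c) (M.incl (ww k))) := by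
      calc c = 1 * c := (one_mul c).symm
        _ = ∑ k, M.innC (M.incl (xx k)) (M.incl (ww k)) * c := by rw [h1C, Finset.sum_mul]
        _ = _ := Finset.sum_congr rfl fun k _ => (M.innC_mul_right _ _ _).symm
    have hcs : star c = ∑ k, M.innC (M.lC (star c) (M.incl (ww k))) (M.incl (xx k)) := by
      have h := congrArg star hc
      simpa [star_sum, M.innC_star] using h
    have hlhs : M.innD t (M.lC c y)
        = ∑ k, M.innD t (M.incl (xx k)) * M.innD (M.lC (star c) (M.incl (ww k))) y := by
      conv_lhs => rw [hc]
      rw [M.lC_sum_left, M.innD_sum_right]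
      exact Finset.sum_congr rfl fun k _ => by rw [M.imprimitivity, M.innD_rD]
    have hrhs : M.innD (M.lC (star c) t) y
        = ∑ k, M.innD t (M.incl (xx k)) * M.innD (M.lC (star c) (M.incl (ww k))) y := by
      conv_lhs => rw [hcs]
      rw [M.lC_sum_left, M.innD_sum_left]
      refine Finset.sum_congr rfl fun k _ => ?_
      rw [M.imprimitivity, M.innD_rD_left, M.innD_star]
    rw [hlhs, hrhs]
  have hL7' : ∀ (c a : C) (yP yQ : Y),
      M.innD (M.lC (star c) yP) (M.lC a yQ) = M.innD yP (M.lC (c * a) yQ) := by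
    intro c a yP yQ
    rw [hL7, ← M.lC_mul, hL7 yP (c * a) yQ, star_mul]
  have hG1 : ∀ d : D,
      (∑ t : Fin NB × Fin m × Fin N,
        M.innD (M.lC (star (u t.2.1)) (M.incl (pp t.1))) (M.incl (ww t.2.2)) *
          M.ιB (ψ (M.innD (M.incl (xx t.2.2)) (M.lC (v t.2.1) (M.incl (qq t.1))) * d))) = d := by
    intro d
    simp only [Fintype.sum_prod_type]
    have key : ∀ (l : Fin NB) (i : Fin m),
        (∑ k : Fin N, (M.innD (M.lC (star (u i)) (M.incl (pp l))) (M.incl (ww k))) * M.ιB (ψ ((M.innD (M.incl (xx k)) (M.lC (v i) (M.incl (qq l)))) * d)))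
          = ∑ n : Fin NB, M.innD (M.lC (star (u i)) (M.incl (pp l)))
              (M.lC (M.ιA (φ (v i * (M.innC (M.rD (M.incl (qq l)) d) (M.incl (pp n)))))) (M.incl (qq n))) := by
      intro l i
      have hk : ∀ k : Fin N,
          (M.innD (M.lC (star (u i)) (M.incl (pp l))) (M.incl (ww k))) * M.ιB (ψ ((M.innD (M.incl (xx k)) (M.lC (v i) (M.incl (qq l)))) * d))
            = ∑ n : Fin NB, M.innD (M.lC (star (u i)) (M.incl (pp l)))
                (M.lC (M.ιA (φ (M.innC (M.incl (ww k)) (M.incl (xx k)) * (v i * (M.innC (M.rD (M.incl (qq l)) d) (M.incl (pp n))))))) (M.incl (qq n))) := by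
        intro k
        calc (M.innD (M.lC (star (u i)) (M.incl (pp l))) (M.incl (ww k))) * M.ιB (ψ ((M.innD (M.incl (xx k)) (M.lC (v i) (M.incl (qq l)))) * d))
            = M.innD (M.lC (star (u i)) (M.incl (pp l)))
                (M.rD (M.incl (ww k)) (M.ιB (ψ (M.innD (M.incl (xx k)) (M.lC (v i) (M.rD (M.incl (qq l)) d)))))) := by
              rw [← M.innD_rD, ← M.innD_rD, M.smul_assoc]
          _ = ∑ n : Fin NB, M.innD (M.lC (star (u i)) (M.incl (pp l)))
                (M.lC (M.innC (M.rD (M.incl (ww k)) (M.ιB (ψ (M.innD (M.incl (xx k)) (M.lC (v i) (M.rD (M.incl (qq l)) d)))))) (M.incl (pp n))) (M.incl (qq n))) := by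
              conv_lhs => rw [hR5 (M.rD (M.incl (ww k)) (M.ιB (ψ (M.innD (M.incl (xx k)) (M.lC (v i) (M.rD (M.incl (qq l)) d))))))]
              rw [M.innD_sum_right]
          _ = ∑ n : Fin NB, M.innD (M.lC (star (u i)) (M.incl (pp l)))
                (M.lC (M.ιA (φ (M.innC (M.incl (ww k)) (M.incl (xx k)) * (v i * (M.innC (M.rD (M.incl (qq l)) d) (M.incl (pp n))))))) (M.incl (qq n))) := by
              refine Finset.sum_congr rfl fun n _ => ?_
              rw [hR7 (M.innD (M.incl (xx k)) (M.lC (v i) (M.rD (M.incl (qq l)) d))) (ww k) (pp n),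
                ← M.imprimitivity, M.innC_lC, M.innC_lC]
      calc (∑ k : Fin N, (M.innD (M.lC (star (u i)) (M.incl (pp l))) (M.incl (ww k))) * M.ιB (ψ ((M.innD (M.incl (xx k)) (M.lC (v i) (M.incl (qq l)))) * d)))
          = ∑ k : Fin N, ∑ n : Fin NB, M.innD (M.lC (star (u i)) (M.incl (pp l)))
              (M.lC (M.ιA (φ (M.innC (M.incl (ww k)) (M.incl (xx k)) * (v i * (M.innC (M.rD (M.incl (qq l)) d) (M.incl (pp n))))))) (M.incl (qq n))) :=
            Finset.sum_congr rfl fun k _ => hk k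
        _ = ∑ n : Fin NB, ∑ k : Fin N, M.innD (M.lC (star (u i)) (M.incl (pp l)))
              (M.lC (M.ιA (φ (M.innC (M.incl (ww k)) (M.incl (xx k)) * (v i * (M.innC (M.rD (M.incl (qq l)) d) (M.incl (pp n))))))) (M.incl (qq n))) := Finset.sum_comm
        _ = ∑ n : Fin NB, M.innD (M.lC (star (u i)) (M.incl (pp l))) (M.lC (M.ιA (φ (v i * (M.innC (M.rD (M.incl (qq l)) d) (M.incl (pp n)))))) (M.incl (qq n))) := by
            refine Finset.sum_congr rfl fun n _ => ?_
            have h2 : (∑ k : Fin N, M.innC (M.incl (ww k)) (M.incl (xx k)) * (v i * (M.innC (M.rD (M.incl (qq l)) d) (M.incl (pp n))))) = v i * (M.innC (M.rD (M.incl (qq l)) d) (M.incl (pp n))) := by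
              rw [← Finset.sum_mul, ← h1C', one_mul]
            calc (∑ k : Fin N, M.innD (M.lC (star (u i)) (M.incl (pp l)))
                  (M.lC (M.ιA (φ (M.innC (M.incl (ww k)) (M.incl (xx k)) * (v i * (M.innC (M.rD (M.incl (qq l)) d) (M.incl (pp n))))))) (M.incl (qq n))))
                = M.innD (M.lC (star (u i)) (M.incl (pp l))) (M.lC (M.ιA (φ (∑ k : Fin N, M.innC (M.incl (ww k)) (M.incl (xx k)) * (v i * (M.innC (M.rD (M.incl (qq l)) d) (M.incl (pp n))))))) (M.incl (qq n))) := by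
                  rw [map_sum φ, map_sum M.ιA, M.lC_sum_left, M.innD_sum_right]
              _ = M.innD (M.lC (star (u i)) (M.incl (pp l))) (M.lC (M.ιA (φ (v i * (M.innC (M.rD (M.incl (qq l)) d) (M.incl (pp n)))))) (M.incl (qq n))) := by rw [h2]
    calc (∑ l : Fin NB, ∑ i : Fin m, ∑ k : Fin N, (M.innD (M.lC (star (u i)) (M.incl (pp l))) (M.incl (ww k))) * M.ιB (ψ ((M.innD (M.incl (xx k)) (M.lC (v i) (M.incl (qq l)))) * d)))
        = ∑ l : Fin NB, ∑ i : Fin m, ∑ n : Fin NB,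
            M.innD (M.lC (star (u i)) (M.incl (pp l))) (M.lC (M.ιA (φ (v i * (M.innC (M.rD (M.incl (qq l)) d) (M.incl (pp n)))))) (M.incl (qq n))) :=
          Finset.sum_congr rfl fun l _ => Finset.sum_congr rfl fun i _ => key l i
      _ = ∑ l : Fin NB, ∑ n : Fin NB, ∑ i : Fin m,
            M.innD (M.lC (star (u i)) (M.incl (pp l))) (M.lC (M.ιA (φ (v i * (M.innC (M.rD (M.incl (qq l)) d) (M.incl (pp n)))))) (M.incl (qq n))) :=
          Finset.sum_congr rfl fun l _ => Finset.sum_comm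
      _ = ∑ l : Fin NB, ∑ n : Fin NB, M.innD (M.incl (pp l)) (M.lC (M.innC (M.rD (M.incl (qq l)) d) (M.incl (pp n))) (M.incl (qq n))) := by
          refine Finset.sum_congr rfl fun l _ => Finset.sum_congr rfl fun n _ => ?_
          calc (∑ i : Fin m, M.innD (M.lC (star (u i)) (M.incl (pp l))) (M.lC (M.ιA (φ (v i * (M.innC (M.rD (M.incl (qq l)) d) (M.incl (pp n)))))) (M.incl (qq n))))
              = ∑ i : Fin m, M.innD (M.incl (pp l)) (M.lC (u i * M.ιA (φ (v i * (M.innC (M.rD (M.incl (qq l)) d) (M.incl (pp n)))))) (M.incl (qq n))) :=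
                Finset.sum_congr rfl fun i _ => hL7' (u i) _ (M.incl (pp l)) (M.incl (qq n))
            _ = M.innD (M.incl (pp l)) (M.lC (∑ i : Fin m, u i * M.ιA (φ (v i * (M.innC (M.rD (M.incl (qq l)) d) (M.incl (pp n)))))) (M.incl (qq n))) := by
                rw [M.lC_sum_left, M.innD_sum_right]
            _ = M.innD (M.incl (pp l)) (M.lC (M.innC (M.rD (M.incl (qq l)) d) (M.incl (pp n))) (M.incl (qq n))) := by rw [← (hqb (M.innC (M.rD (M.incl (qq l)) d) (M.incl (pp n)))).1]
      _ = ∑ l : Fin NB, M.innD (M.incl (pp l)) (M.rD (M.incl (qq l)) d) := by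
          refine Finset.sum_congr rfl fun l _ => ?_
          rw [← M.innD_sum_right, ← hR5]
      _ = ∑ l : Fin NB, M.innD (M.incl (pp l)) (M.incl (qq l)) * d :=
          Finset.sum_congr rfl fun l _ => M.innD_rD _ _ _
      _ = d := by rw [← Finset.sum_mul, ← h1D, one_mul]
  have hG2 : ∀ d : D,
      (∑ t : Fin NB × Fin m × Fin N,
        M.ιB (ψ (d * M.innD (M.lC (star (u t.2.1)) (M.incl (pp t.1))) (M.incl (ww t.2.2)))) *
          M.innD (M.incl (xx t.2.2)) (M.lC (v t.2.1) (M.incl (qq t.1)))) = d := by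
    intro d
    simp only [Fintype.sum_prod_type]
    have keyB : ∀ (l n : Fin NB) (i : Fin m),
        M.ιA (φ ((M.innC (M.rD (M.incl (qq l)) d) (M.incl (pp n))) * u i))
          = ∑ k : Fin N, M.innC (M.rD (M.incl (qq l)) (M.ιB (ψ (d * (M.innD (M.lC (star (u i)) (M.incl (pp n))) (M.incl (ww k))))))) (M.incl (xx k)) := by
      intro l n i
      have hcu : (M.innC (M.rD (M.incl (qq l)) d) (M.incl (pp n))) * u i = ∑ k : Fin N, M.innC (M.rD (M.incl (qq l)) (d * (M.innD (M.lC (star (u i)) (M.incl (pp n))) (M.incl (ww k))))) (M.incl (xx k)) := by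
        calc (M.innC (M.rD (M.incl (qq l)) d) (M.incl (pp n))) * u i
            = M.innC (M.rD (M.incl (qq l)) d) (M.lC (star (u i)) (M.incl (pp n))) := (M.innC_mul_right _ _ _).symm
          _ = M.innC (M.rD (M.incl (qq l)) d)
              (∑ k : Fin N, M.rD (M.incl (xx k)) (M.innD (M.incl (ww k)) (M.lC (star (u i)) (M.incl (pp n))))) := by
              conv_lhs => rw [hR6 (M.lC (star (u i)) (M.incl (pp n)))]
          _ = ∑ k : Fin N, M.innC (M.rD (M.incl (qq l)) d)
                (M.rD (M.incl (xx k)) (M.innD (M.incl (ww k)) (M.lC (star (u i)) (M.incl (pp n))))) := M.innC_sum_right _ _ _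
          _ = ∑ k : Fin N, M.innC (M.rD (M.incl (qq l)) (d * (M.innD (M.lC (star (u i)) (M.incl (pp n))) (M.incl (ww k))))) (M.incl (xx k)) := by
              refine Finset.sum_congr rfl fun k _ => ?_
              rw [hR3, ← M.rD_mul, M.innD_star]
      calc M.ιA (φ ((M.innC (M.rD (M.incl (qq l)) d) (M.incl (pp n))) * u i))
          = ∑ k : Fin N, M.ιA (φ (M.innC (M.rD (M.incl (qq l)) (d * (M.innD (M.lC (star (u i)) (M.incl (pp n))) (M.incl (ww k))))) (M.incl (xx k)))) := by
            rw [hcu, map_sum φ, map_sum M.ιA]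
        _ = ∑ k : Fin N, M.innC (M.rD (M.incl (qq l)) (M.ιB (ψ (d * (M.innD (M.lC (star (u i)) (M.incl (pp n))) (M.incl (ww k))))))) (M.incl (xx k)) :=
            Finset.sum_congr rfl fun k _ => (hR7 (d * (M.innD (M.lC (star (u i)) (M.incl (pp n))) (M.incl (ww k)))) (qq l) (xx k)).symm
    have keyB2 : ∀ (l n : Fin NB),
        M.innD (M.incl (pp l)) (M.lC (M.innC (M.rD (M.incl (qq l)) d) (M.incl (pp n))) (M.incl (qq n)))
          = ∑ i : Fin m, ∑ k : Fin N,
              M.innD (M.incl (pp l)) (M.incl (qq l)) * (M.ιB (ψ (d * (M.innD (M.lC (star (u i)) (M.incl (pp n))) (M.incl (ww k))))) * (M.innD (M.incl (xx k)) (M.lC (v i) (M.incl (qq n))))) := by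
      intro l n
      calc M.innD (M.incl (pp l)) (M.lC (M.innC (M.rD (M.incl (qq l)) d) (M.incl (pp n))) (M.incl (qq n)))
          = M.innD (M.incl (pp l)) (M.lC (∑ i : Fin m, M.ιA (φ ((M.innC (M.rD (M.incl (qq l)) d) (M.incl (pp n))) * u i)) * v i) (M.incl (qq n))) := by
            conv_lhs => rw [(hqb (M.innC (M.rD (M.incl (qq l)) d) (M.incl (pp n)))).2]
        _ = ∑ i : Fin m, M.innD (M.incl (pp l)) (M.lC (M.ιA (φ ((M.innC (M.rD (M.incl (qq l)) d) (M.incl (pp n))) * u i)) * v i) (M.incl (qq n))) := by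
            rw [M.lC_sum_left, M.innD_sum_right]
        _ = ∑ i : Fin m, ∑ k : Fin N,
              M.innD (M.incl (pp l)) (M.incl (qq l)) * (M.ιB (ψ (d * (M.innD (M.lC (star (u i)) (M.incl (pp n))) (M.incl (ww k))))) * (M.innD (M.incl (xx k)) (M.lC (v i) (M.incl (qq n))))) := by
            refine Finset.sum_congr rfl fun i _ => ?_
            rw [M.lC_mul, keyB l n i, M.lC_sum_left, M.innD_sum_right]
            refine Finset.sum_congr rfl fun k _ => ?_
            rw [M.imprimitivity, ← M.rD_mul, M.innD_rD]
    have hmain : d = ∑ n : Fin NB, ∑ i : Fin m, ∑ k : Fin N,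
        M.ιB (ψ (d * (M.innD (M.lC (star (u i)) (M.incl (pp n))) (M.incl (ww k))))) * (M.innD (M.incl (xx k)) (M.lC (v i) (M.incl (qq n)))) := by
      calc d = ∑ l : Fin NB, M.innD (M.incl (pp l)) (M.incl (qq l)) * d := by
            rw [← Finset.sum_mul, ← h1D, one_mul]
        _ = ∑ l : Fin NB, M.innD (M.incl (pp l)) (M.rD (M.incl (qq l)) d) :=
            Finset.sum_congr rfl fun l _ => (M.innD_rD _ _ _).symm
        _ = ∑ l : Fin NB, ∑ n : Fin NB, M.innD (M.incl (pp l)) (M.lC (M.innC (M.rD (M.incl (qq l)) d) (M.incl (pp n))) (M.incl (qq n))) := by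
            refine Finset.sum_congr rfl fun l _ => ?_
            conv_lhs => rw [hR5 (M.rD (M.incl (qq l)) d)]
            exact M.innD_sum_right _ _ _
        _ = ∑ l : Fin NB, ∑ n : Fin NB, ∑ i : Fin m, ∑ k : Fin N,
              M.innD (M.incl (pp l)) (M.incl (qq l)) * (M.ιB (ψ (d * (M.innD (M.lC (star (u i)) (M.incl (pp n))) (M.incl (ww k))))) * (M.innD (M.incl (xx k)) (M.lC (v i) (M.incl (qq n))))) :=
            Finset.sum_congr rfl fun l _ => Finset.sum_congr rfl fun n _ => keyB2 l n
        _ = ∑ n : Fin NB, ∑ i : Fin m, ∑ k : Fin N, M.ιB (ψ (d * (M.innD (M.lC (star (u i)) (M.incl (pp n))) (M.incl (ww k))))) * (M.innD (M.incl (xx k)) (M.lC (v i) (M.incl (qq n)))) := by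
            simp only [← Finset.mul_sum]
            rw [← Finset.sum_mul, ← h1D, one_mul]
    exact hmain.symm
  refine ⟨Fintype.card (Fin NB × Fin m × Fin N),
    (fun j => M.innD (M.lC (star (u ((Fintype.equivFin (Fin NB × Fin m × Fin N)).symm j).2.1))
        (M.incl (pp ((Fintype.equivFin (Fin NB × Fin m × Fin N)).symm j).1)))
      (M.incl (ww ((Fintype.equivFin (Fin NB × Fin m × Fin N)).symm j).2.2))),
    (fun j => M.innD (M.incl (xx ((Fintype.equivFin (Fin NB × Fin m × Fin N)).symm j).2.2))
        (M.lC (v ((Fintype.equivFin (Fin NB × Fin m × Fin N)).symm j).2.1)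
          (M.incl (qq ((Fintype.equivFin (Fin NB × Fin m × Fin N)).symm j).1)))),
    fun d => ⟨?_, ?_⟩⟩
  · conv_lhs => rw [← hG1 d]
    exact (Equiv.sum_comp (Fintype.equivFin (Fin NB × Fin m × Fin N)).symm _).symm
  · conv_lhs => rw [← hG2 d]
    exact (Equiv.sum_comp (Fintype.equivFin (Fin NB × Fin m × Fin N)).symm _).symm
end
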